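/- Let (W,S) be a Coxeter system. If q' ≤ q are (I,J)-cosets, p is a (K,I)-coset, and r is a (J,L)-coset, then p * q' * r ≤ p * q * r in the Bruhat order on (K,L)-cosets. -/

import Mathlib

namespace CoxeterPaper

open CoxeterSystem

variable {B : Type*} {W : Type*} [Group W] {M : CoxeterMatrix B}

/-- The Bruhat order on a Coxeter group: the reflexive-transitive closure of the
relation `a < a * t` for `t` a reflection with length increasing. -/
def BruhatLE (cs : CoxeterSystem M W) (x y : W) : Prop :=
  Relation.ReflTransGen
    (fun a b => (∃ t, cs.IsReflection t ∧ b = a * t) ∧ cs.length a < cs.length b) x y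

/-- One step of the Demazure product with a simple reflection. -/
noncomputable def demStep (cs : CoxeterSystem M W) (x : W) (i : B) : W :=
  if cs.length x < cs.length (x * cs.simple i) then x * cs.simple i else x

/-- The Demazure product of `x` with the word `l`. -/
noncomputable def demWord (cs : CoxeterSystem M W) (x : W) (l : List B) : W :=
  l.foldl (demStep cs) x

/-- The Demazure product (Coxeter monoid product) of two elements: fold the
Demazure action of a reduced word of `y` onto `x`. -/
noncomputable def dem (cs : CoxeterSystem M W) (x y : W) : W :=
  demWord cs x (Classical.choose (cs.exists_reduced_word y))

/-- The standard parabolic subgroup attached to a set of simple indices. -/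
def parabolic (cs : CoxeterSystem M W) (I : Set B) : Subgroup W :=
  Subgroup.closure (cs.simple '' I)

/-- `I` is finitary if the parabolic subgroup `W_I` is finite. -/
def Finitary (cs : CoxeterSystem M W) (I : Set B) : Prop :=
  (parabolic cs I : Set W).Finite

/-- The double coset `W_I w W_J` as a subset of `W`. -/
def doset (cs : CoxeterSystem M W) (I J : Set B) (w : W) : Set W :=
  {x | ∃ a ∈ parabolic cs I, ∃ b ∈ parabolic cs J, x = a * w * b}

/-- `p` is an `(I,J)`-double coset. -/
def IsDCoset (cs : CoxeterSystem M W) (I J : Set B) (p : Set W) : Prop :=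
  ∃ w, p = doset cs I J w

/-- `m` is the Bruhat-minimal element of `p`. -/
def IsMinOf (cs : CoxeterSystem M W) (p : Set W) (m : W) : Prop :=
  m ∈ p ∧ ∀ x ∈ p, BruhatLE cs m x

/-- `m` is the Bruhat-maximal element of `p`. -/
def IsMaxOf (cs : CoxeterSystem M W) (p : Set W) (m : W) : Prop :=
  m ∈ p ∧ ∀ x ∈ p, BruhatLE cs x m

/-- `[I 0, …, I d]` is a singlestep expression. -/
def IsSinglestep (I : ℕ → Set B) (d : ℕ) : Prop :=
  ∀ k < d, (∃ s, s ∉ I k ∧ I (k + 1) = insert s (I k)) ∨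
    (∃ s, s ∈ I k ∧ I (k + 1) = I k \ {s})

/-- `p` is a path subordinate to the singlestep expression `[I 0, …, I d]`. -/
def IsSubPath (cs : CoxeterSystem M W) (I : ℕ → Set B) (d : ℕ) (p : ℕ → Set W) : Prop :=
  p 0 = doset cs (I 0) (I 0) 1 ∧
  (∀ i ≤ d, IsDCoset cs (I 0) (I i) (p i)) ∧
  ∀ k < d, (I k ⊆ I (k + 1) → p k ⊆ p (k + 1)) ∧ (I (k + 1) ⊆ I k → p (k + 1) ⊆ p k)

/-- The Demazure product `w_{I_0} * w_{I_1} * ⋯ * w_{I_d}` of the longest elements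
`wI 0, …, wI d`. -/
noncomputable def exprMax (cs : CoxeterSystem M W) (wI : ℕ → W) (d : ℕ) : W :=
  ((List.range d).map fun k => wI (k + 1)).foldl (dem cs) (wI 0)

/-!
Comparing minima of `(I,J)`-cosets transfers to their maxima: every simple reflection of `I`
(resp. `J`) is a left (resp. right) descent of `max q`, and the lifting property shows that
`W_I · [1, max q] · W_J ⊆ [1, max q]`, so `max q' ≤ max q`. The Demazure product `x ⋆ y` is the
largest element of `x · [1, y]`, hence monotone in both arguments, which gives
`max p ⋆ max q' ⋆ max r ≤ max p ⋆ max q ⋆ max r`. Dually, the minimum of a double coset lies below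
every element of a double coset containing an element above it, so minima are monotone as well.

The lifting property is proved together with the subword property by induction on length. The
strong exchange condition they rest on comes from the parity of the number of occurrences of a
reflection in the inversion sequence of a word: it depends only on the product of the word, being
read off from an action of `W` on `W × ZMod 2`.
-/

open List

variable (cs : CoxeterSystem M W)

local prefix:100 "s" => cs.simple
local prefix:100 "π" => cs.wordProd
local prefix:100 "ℓ" => cs.length
local prefix:100 "lis " => cs.leftInvSeq

theorem _root_.List.drop_eq_take_of_getElem_add {α : Type*} {l : List α} {m : ℕ}
    (hl : l.length = 2 * m) (h : ∀ k (hk : k < m), l[m + k] = l[k]) : l.drop m = l.take m := by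
  refine List.ext_getElem (by simp [hl]; omega) fun k _ hk => ?_
  simp only [List.getElem_drop, List.getElem_take]
  exact h k (by simp at hk; omega)

theorem _root_.List.Sublist.cases_append_singleton {α : Type*} {σ ω : List α} {c : α}
    (h : σ <+ ω ++ [c]) : σ <+ ω ∨ ∃ σ', σ = σ' ++ [c] ∧ σ' <+ ω := by
  obtain ⟨l₁, l₂, rfl, h₁, h₂⟩ := List.sublist_append_iff.1 h
  rcases List.sublist_singleton.1 h₂ with rfl | rfl
  · exact Or.inl (by simpa using h₁)
  · exact Or.inr ⟨l₁, rfl, h₁⟩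

theorem prod_map_alternatingWord_two_mul {G : Type*} [Monoid G] (f : B → G) (i j : B)
    (k : ℕ) : ((alternatingWord i j (2 * k)).map f).prod = (f i * f j) ^ k := by
  induction k with
  | zero => simp [alternatingWord]
  | succ k ih =>
    rw [show 2 * (k + 1) = 2 * k + 1 + 1 by ring, alternatingWord_succ', alternatingWord_succ',
      if_neg (Nat.not_even_two_mul_add_one k), if_pos (even_two_mul k)]
    simp [ih, pow_succ', mul_assoc]

theorem wordProd_alternatingWord_two_mul_add_one (i j : B) (k : ℕ) :
    π (alternatingWord i j (2 * k + 1)) = s j * (s i * s j) ^ k := by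
  rw [alternatingWord_succ', if_pos (even_two_mul k), wordProd_cons, wordProd,
    prod_map_alternatingWord_two_mul]

theorem even_count_leftInvSeq_braid [DecidableEq W] (i j : B) (t : W) :
    Even ((lis (alternatingWord i j (2 * M i j))).count t) := by
  set l := lis (alternatingWord i j (2 * M i j))
  have hperiod : l.drop (M i j) = l.take (M i j) := by
    refine List.drop_eq_take_of_getElem_add (by simp [l]) fun k hk => ?_
    rw [getElem_leftInvSeq_alternatingWord cs i j _ _ (by omega),
      getElem_leftInvSeq_alternatingWord cs i j _ _ (by omega),
      wordProd_alternatingWord_two_mul_add_one, wordProd_alternatingWord_two_mul_add_one,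
      pow_add, M.symmetric i j, simple_mul_simple_pow, one_mul]
  rw [← List.take_append_drop (M i j) l, List.count_append, hperiod]
  exact ⟨_, rfl⟩

theorem wordProd_alternatingWord_two_mul_eq_one (i j : B) :
    π (alternatingWord i j (2 * M i j)) = 1 := by
  rw [wordProd, prod_map_alternatingWord_two_mul, simple_mul_simple_pow]

section ReflParity

theorem simple_mul_mul_simple_eq_simple_iff (i : B) (t : W) : s i * t * s i = s i ↔ t = s i := by
  constructor
  · intro h
    simpa [mul_assoc] using congrArg (fun u => s i * u * s i) h
  · rintro rfl
    simp

variable [DecidableEq W]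

def simpleReflPerm (i : B) : Equiv.Perm (W × ZMod 2) :=
  Function.Involutive.toPerm (fun x => (s i * x.1 * s i, if x.1 = s i then x.2 + 1 else x.2))
    fun ⟨t, a⟩ => by
      simp only [simple_mul_mul_simple_eq_simple_iff]
      have hconj : s i * (s i * t * s i) * s i = t := by simp [mul_assoc]
      split_ifs <;> simp [hconj, add_assoc, CharTwo.add_self_eq_zero]

theorem simpleReflPerm_apply (i : B) (x : W × ZMod 2) :
    simpleReflPerm cs i x = (s i * x.1 * s i, if x.1 = s i then x.2 + 1 else x.2) :=
  rfl

theorem count_map_conj_simple (i : B) (t : W) (l : List W) :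
    (l.map (MulAut.conj (s i))).count t = l.count (s i * t * s i) := by
  conv_lhs => rw [show t = MulAut.conj (s i) (s i * t * s i) by simp [mul_assoc]]
  exact List.count_map_of_injective _ _ (MulAut.conj (s i)).injective _

theorem prod_map_simpleReflPerm (ω : List B) (t : W) (a : ZMod 2) :
    (ω.map (simpleReflPerm cs)).prod ((π ω)⁻¹ * t * π ω, a) = (t, a + (lis ω).count t) := by
  induction ω generalizing t a with
  | nil => simp
  | cons i ω ih =>
    have hconj : (s i * π ω)⁻¹ * t * (s i * π ω) = (π ω)⁻¹ * (s i * t * s i) * π ω := by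
      simp [mul_assoc]
    rw [map_cons, prod_cons, Equiv.Perm.mul_apply, wordProd_cons, hconj, ih, leftInvSeq,
      count_cons, count_map_conj_simple]
    simp only [simpleReflPerm_apply, simple_mul_mul_simple_eq_simple_iff, beq_iff_eq,
      eq_comm (a := s i)]
    split_ifs <;> simp [mul_assoc, add_assoc]

theorem isLiftable_simpleReflPerm : M.IsLiftable (simpleReflPerm cs) := by
  intro i j
  rw [← prod_map_alternatingWord_two_mul]
  ext ⟨t, a⟩ : 1
  have h := prod_map_simpleReflPerm cs (alternatingWord i j (2 * M i j)) t a
  rw [wordProd_alternatingWord_two_mul_eq_one, inv_one, one_mul, mul_one,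
    (ZMod.natCast_eq_zero_iff_even).2 (even_count_leftInvSeq_braid cs i j t), add_zero] at h
  rw [h, Equiv.Perm.one_apply]

def reflPermHom : W →* Equiv.Perm (W × ZMod 2) :=
  cs.lift ⟨simpleReflPerm cs, isLiftable_simpleReflPerm cs⟩

theorem reflPermHom_wordProd (ω : List B) :
    reflPermHom cs (π ω) = (ω.map (simpleReflPerm cs)).prod := by
  rw [wordProd, map_list_prod, map_map]
  congr 1
  exact map_congr_left fun i _ => lift_apply_simple cs _ i

/-- `reflParity w t` is the parity of the number of occurrences of `t` in the left inversion
sequence of any word for `w` (`reflParity_wordProd`). -/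
def reflParity (w t : W) : ZMod 2 :=
  (reflPermHom cs w (w⁻¹ * t * w, 0)).2

theorem reflParity_wordProd (ω : List B) (t : W) : reflParity cs (π ω) t = (lis ω).count t := by
  simp [reflParity, reflPermHom_wordProd, prod_map_simpleReflPerm]

theorem reflPermHom_apply (w t : W) (a : ZMod 2) :
    reflPermHom cs w (w⁻¹ * t * w, a) = (t, a + reflParity cs w t) := by
  obtain ⟨ω, rfl⟩ := cs.wordProd_surjective w
  rw [reflParity_wordProd, reflPermHom_wordProd, prod_map_simpleReflPerm]

theorem reflParity_mul (w₁ w₂ t : W) :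
    reflParity cs (w₁ * w₂) t = reflParity cs w₁ t + reflParity cs w₂ (w₁⁻¹ * t * w₁) := by
  have hconj : (w₁ * w₂)⁻¹ * t * (w₁ * w₂) = w₂⁻¹ * (w₁⁻¹ * t * w₁) * w₂ := by group
  rw [reflParity, hconj, map_mul, Equiv.Perm.mul_apply, reflPermHom_apply, zero_add,
    reflPermHom_apply, add_comm]

theorem reflParity_one (t : W) : reflParity cs 1 t = 0 := by
  simpa using reflParity_wordProd cs [] t

theorem reflParity_self {t : W} (ht : cs.IsReflection t) : reflParity cs t t = 1 := by
  obtain ⟨w, i, rfl⟩ := ht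
  have hsimple : reflParity cs (s i) (s i) = 1 := by
    simpa using reflParity_wordProd cs [i] (s i)
  have hconj₁ : w⁻¹ * (w * s i * w⁻¹) * w = s i := by group
  have hconj₂ : (w * s i)⁻¹ * (w * s i * w⁻¹) * (w * s i) = s i := by group
  have hinv : reflParity cs w⁻¹ (s i) = reflParity cs w (w * s i * w⁻¹) := by
    have h := reflParity_mul cs w w⁻¹ (w * s i * w⁻¹)
    rw [mul_inv_cancel, reflParity_one, hconj₁, eq_comm, CharTwo.add_eq_zero] at h
    exact h.symm
  rw [reflParity_mul, reflParity_mul, hconj₁, hconj₂, hsimple, hinv, add_right_comm,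
    CharTwo.add_self_eq_zero, zero_add]

end ReflParity

theorem exists_eraseIdx_of_mem_leftInvSeq {ω : List B} {t : W} (ht : t ∈ lis ω) :
    ∃ j < ω.length, t * π ω = π (ω.eraseIdx j) := by
  obtain ⟨j, hj, rfl⟩ := List.getElem_of_mem ht
  refine ⟨j, by simpa using hj, ?_⟩
  rw [← getD_leftInvSeq_mul_wordProd, List.getD_eq_getElem _ _ hj]

/-- The strong exchange condition. -/
theorem mem_leftInvSeq_of_isLeftInversion {ω : List B} {t : W}
    (ht : cs.IsLeftInversion (π ω) t) : t ∈ lis ω := by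
  classical
  obtain ⟨ω₁, hω₁, hπ⟩ := cs.exists_isReduced (t * π ω)
  -- Deleting `t` from `ω₁` would give a word for `π ω` of length `< ℓ (π ω)`.
  have hnot : t ∉ lis ω₁ := by
    intro hmem
    obtain ⟨j, hj, hdel⟩ := exists_eraseIdx_of_mem_leftInvSeq cs hmem
    rw [← hπ, ← mul_assoc, ht.1.mul_self, one_mul] at hdel
    have hle := cs.length_wordProd_le (ω₁.eraseIdx j)
    rw [← hdel, List.length_eraseIdx_of_lt hj, ← hω₁.eq, ← hπ] at hle
    have hlt : ℓ (t * π ω) < ℓ (π ω) := ht.2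
    omega
  have hodd : reflParity cs (π ω) t = 1 := by
    calc reflParity cs (π ω) t = reflParity cs (t * (t * π ω)) t := by
          rw [← mul_assoc, ht.1.mul_self, one_mul]
      _ = 1 := by
          rw [reflParity_mul, reflParity_self cs ht.1, inv_mul_cancel, one_mul, hπ,
            reflParity_wordProd, List.count_eq_zero.2 hnot, Nat.cast_zero, add_zero]
  rw [reflParity_wordProd] at hodd
  exact List.count_pos_iff.1 (Nat.pos_of_ne_zero fun h => by simp [h] at hodd)

theorem exists_eraseIdx_of_isRightInversion {ω : List B} {t : W}
    (ht : cs.IsRightInversion (π ω) t) : ∃ j, π ω * t = π (ω.eraseIdx j) := by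
  have hleft : cs.IsLeftInversion (π ω) (π ω * t * (π ω)⁻¹) := by
    refine ⟨ht.1.conj _, ?_⟩
    simpa using ht.2
  obtain ⟨j, -, hj⟩ := exists_eraseIdx_of_mem_leftInvSeq cs
    (mem_leftInvSeq_of_isLeftInversion cs hleft)
  exact ⟨j, by simpa using hj⟩

variable {cs}

theorem _root_.CoxeterSystem.IsReduced.of_append_singleton {ω : List B} {c : B}
    (h : cs.IsReduced (ω ++ [c])) : cs.IsReduced ω ∧ ℓ (π ω) < ℓ (π ω * s c) := by
  have hω : cs.IsReduced ω := by simpa using h.take ω.length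
  refine ⟨hω, ?_⟩
  have := h.eq
  rw [wordProd_append, wordProd_singleton, length_append, length_singleton] at this
  rw [hω.eq, this]
  omega

namespace BruhatLE

protected theorem refl (x : W) : BruhatLE cs x x :=
  Relation.ReflTransGen.refl

protected theorem trans {x y z : W} (h₁ : BruhatLE cs x y) (h₂ : BruhatLE cs y z) :
    BruhatLE cs x z :=
  Relation.ReflTransGen.trans h₁ h₂

theorem length_le {x y : W} (h : BruhatLE cs x y) : ℓ x ≤ ℓ y := by
  induction h with
  | refl => rfl
  | tail _ hstep ih => exact ih.trans hstep.2.le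

theorem inv {x y : W} (h : BruhatLE cs x y) : BruhatLE cs x⁻¹ y⁻¹ := by
  induction h with
  | refl => exact .refl _
  | @tail b c _ hstep ih =>
    obtain ⟨⟨t, ht, rfl⟩, hlt⟩ := hstep
    refine ih.trans (Relation.ReflTransGen.single ⟨⟨b * t * b⁻¹, ht.conj b, ?_⟩, ?_⟩)
    · rw [mul_inv_rev, ht.inv]
      group
    · rwa [cs.length_inv, cs.length_inv]

theorem exists_sublist {u : W} {ω : List B} (h : BruhatLE cs u (π ω)) :
    ∃ σ, σ <+ ω ∧ π σ = u := by
  generalize hw : π ω = w at h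
  induction h generalizing ω with
  | refl => exact ⟨ω, .refl ω, hw⟩
  | @tail b c _ hstep ih =>
    obtain ⟨⟨t, ht, rfl⟩, hlt⟩ := hstep
    have hinv : cs.IsRightInversion (π ω) t := ⟨ht, by rwa [hw, mul_assoc, ht.mul_self, mul_one]⟩
    obtain ⟨j, hj⟩ := exists_eraseIdx_of_isRightInversion cs hinv
    obtain ⟨σ, hσ, rfl⟩ := ih (ω := ω.eraseIdx j)
      (by rw [← hj, hw, mul_assoc, ht.mul_self, mul_one])
    exact ⟨σ, hσ.trans (List.eraseIdx_sublist ω j), rfl⟩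

end BruhatLE

theorem bruhatLE_mul_reflection {x t : W} (ht : cs.IsReflection t) (h : ℓ x < ℓ (x * t)) :
    BruhatLE cs x (x * t) :=
  Relation.ReflTransGen.single ⟨⟨t, ht, rfl⟩, h⟩

theorem bruhatLE_reflection_mul {x t : W} (ht : cs.IsReflection t) (h : ℓ x < ℓ (t * x)) :
    BruhatLE cs x (t * x) := by
  have hconj : x * (x⁻¹ * t * x) = t * x := by group
  have := bruhatLE_mul_reflection (cs := cs) (x := x) (by simpa using ht.conj x⁻¹)
  rw [hconj] at this
  exact this h

theorem bruhatLE_mul_simple {x : W} {i : B} (h : ℓ x < ℓ (x * s i)) :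
    BruhatLE cs x (x * s i) :=
  bruhatLE_mul_reflection (cs.isReflection_simple i) h

theorem bruhatLE_simple_mul {x : W} {i : B} (h : ℓ x < ℓ (s i * x)) :
    BruhatLE cs x (s i * x) :=
  bruhatLE_reflection_mul (cs.isReflection_simple i) h

theorem bruhatLE_mul_simple_of_isRightDescent {x : W} {i : B} (h : cs.IsRightDescent x i) :
    BruhatLE cs (x * s i) x := by
  have := bruhatLE_mul_simple (cs := cs) (x := x * s i) (i := i)
    (by rwa [simple_mul_simple_cancel_right])
  rwa [simple_mul_simple_cancel_right] at this

variable (cs) in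
/-- Proved for all `n` by induction on `n`, together with the subword property
(`LiftingPropertyBelow.bruhatLE_wordProd_of_sublist`). -/
def LiftingPropertyBelow (n : ℕ) : Prop :=
  ∀ ⦃x y : W⦄ ⦃i : B⦄, BruhatLE cs x y → ℓ x < ℓ (x * s i) → ℓ y < ℓ (y * s i) → ℓ y < n →
    BruhatLE cs (x * s i) (y * s i)

namespace LiftingPropertyBelow

variable {n : ℕ}

theorem mul_simple_mul_simple (hn : LiftingPropertyBelow cs n) {x y : W} {i : B}
    (h : BruhatLE cs x y) (hy : ℓ y < ℓ (y * s i)) (hlen : ℓ y < n) : BruhatLE cs (x * s i) (y * s i) := by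
  rcases Nat.lt_or_gt_of_ne (cs.length_mul_simple_ne x i) with hx | hx
  · exact (bruhatLE_mul_simple_of_isRightDescent hx).trans (h.trans (bruhatLE_mul_simple hy))
  · exact hn h hx hy hlen

theorem bruhatLE_wordProd_of_sublist (hn : LiftingPropertyBelow cs n) {ω σ : List B}
    (hω : cs.IsReduced ω) (hlen : ω.length ≤ n) (hσ : σ <+ ω) : BruhatLE cs (π σ) (π ω) := by
  induction ω using List.reverseRecOn generalizing σ with
  | nil => rw [List.sublist_nil.1 hσ]; exact .refl _
  | append_singleton ω c ih =>
    obtain ⟨hω', hasc⟩ := hω.of_append_singleton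
    rw [length_append, length_singleton] at hlen
    have ih' : ∀ {σ}, σ <+ ω → BruhatLE cs (π σ) (π ω) := ih hω' (by omega)
    rw [wordProd_append, wordProd_singleton]
    rcases hσ.cases_append_singleton with hσ | ⟨σ', rfl, hσ'⟩
    · exact (ih' hσ).trans (bruhatLE_mul_simple hasc)
    · rw [wordProd_append, wordProd_singleton]
      exact hn.mul_simple_mul_simple (ih' hσ') hasc (by rw [hω'.eq]; omega)

theorem le_mul_simple_or (hn : LiftingPropertyBelow cs n) {x y : W} {i : B}
    (h : BruhatLE cs x y) (hy : cs.IsRightDescent y i) (hlen : ℓ y ≤ n + 1) :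
    BruhatLE cs x (y * s i) ∨ BruhatLE cs (x * s i) (y * s i) := by
  obtain ⟨ω, hω, hπ⟩ := cs.exists_isReduced (y * s i)
  have hy' : y = π (ω ++ [i]) := by
    rw [wordProd_append, wordProd_singleton, ← hπ, simple_mul_simple_cancel_right]
  have hred : cs.IsReduced (ω ++ [i]) := by
    rw [CoxeterSystem.IsReduced, ← hy', length_append, length_singleton, ← hω.eq, ← hπ]
    exact ((cs.isRightDescent_iff).1 hy).symm
  have hωlen : ω.length ≤ n := by
    rw [← hω.eq, ← hπ]
    have := (cs.isRightDescent_iff).1 hy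
    omega
  rw [hy'] at h
  obtain ⟨σ, hσ, rfl⟩ := h.exists_sublist
  rw [hπ]
  rcases hσ.cases_append_singleton with hσ | ⟨σ', rfl, hσ'⟩
  · exact Or.inl (hn.bruhatLE_wordProd_of_sublist hω hωlen hσ)
  · right
    rw [wordProd_append, wordProd_singleton, simple_mul_simple_cancel_right]
    exact hn.bruhatLE_wordProd_of_sublist hω hωlen hσ'

theorem mul_simple_le (hn : LiftingPropertyBelow cs n) {x y : W} {i : B}
    (h : BruhatLE cs x y) (hy : cs.IsRightDescent y i) (hlen : ℓ y ≤ n) : BruhatLE cs (x * s i) y := by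
  have hdesc := (cs.isRightDescent_iff).1 hy
  rcases hn.le_mul_simple_or h hy (by omega) with hx | hx
  · have := hn.mul_simple_mul_simple hx (by rw [simple_mul_simple_cancel_right]; omega)
      (by omega)
    rwa [simple_mul_simple_cancel_right] at this
  · exact hx.trans (bruhatLE_mul_simple_of_isRightDescent hy)

theorem succ (hn : LiftingPropertyBelow cs n) : LiftingPropertyBelow cs (n + 1) := by
  intro x y i h hx hy hlen
  induction h using Relation.ReflTransGen.head_induction_on with
  | refl => exact .refl _
  | @head a c hstep hcy ih =>
    rcases Nat.lt_or_gt_of_ne (cs.length_mul_simple_ne c i) with hc | hc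
    · have hcy_len : ℓ c ≤ ℓ y := BruhatLE.length_le hcy
      have hac : BruhatLE cs (a * s i) c :=
        hn.mul_simple_le (Relation.ReflTransGen.single hstep) hc (by omega)
      exact hac.trans (hcy.trans (bruhatLE_mul_simple hy))
    · refine .trans ?_ (ih hc)
      obtain ⟨⟨t, ht, rfl⟩, hlt⟩ := hstep
      have hconj : a * t * s i = a * s i * (s i * t * s i) := by
        simp [mul_assoc]
      rw [hconj]
      refine bruhatLE_mul_reflection (by simpa using ht.conj (s i)) ?_
      rw [← hconj]
      have := cs.length_mul_simple a i
      omega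

end LiftingPropertyBelow

theorem liftingPropertyBelow (n : ℕ) : LiftingPropertyBelow cs n := by
  induction n with
  | zero => intro _ _ _ _ _ _ h; omega
  | succ n ih => exact ih.succ

namespace BruhatLE

variable {x y : W} {i : B}

theorem mul_simple_mul_simple (h : BruhatLE cs x y) (hy : ℓ y < ℓ (y * s i)) :
    BruhatLE cs (x * s i) (y * s i) :=
  (liftingPropertyBelow _).mul_simple_mul_simple h hy (Nat.lt_succ_self _)

theorem mul_simple_le (h : BruhatLE cs x y) (hy : cs.IsRightDescent y i) :
    BruhatLE cs (x * s i) y :=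
  (liftingPropertyBelow _).mul_simple_le h hy le_rfl

theorem le_mul_simple_or (h : BruhatLE cs x y) (hy : cs.IsRightDescent y i) :
    BruhatLE cs x (y * s i) ∨ BruhatLE cs (x * s i) (y * s i) :=
  (liftingPropertyBelow (ℓ y)).le_mul_simple_or h hy (Nat.le_succ _)

theorem simple_mul_le (h : BruhatLE cs x y) (hy : cs.IsLeftDescent y i) :
    BruhatLE cs (s i * x) y := by
  simpa using (h.inv.mul_simple_le (cs.isRightDescent_inv_iff.2 hy)).inv

theorem le_simple_mul_or (h : BruhatLE cs x y) (hy : cs.IsLeftDescent y i) :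
    BruhatLE cs x (s i * y) ∨ BruhatLE cs (s i * x) (s i * y) := by
  rcases h.inv.le_mul_simple_or (cs.isRightDescent_inv_iff.2 hy) with h' | h'
  · exact Or.inl (by simpa using h'.inv)
  · exact Or.inr (by simpa using h'.inv)

theorem le_simple_mul {m u : W} {i : B} (h : BruhatLE cs m u)
    (hm : ℓ m < ℓ (s i * m)) : BruhatLE cs m (s i * u) := by
  rcases Nat.lt_or_gt_of_ne (cs.length_simple_mul_ne u i) with hu | hu
  · exact (h.le_simple_mul_or hu).elim id (bruhatLE_simple_mul hm).trans
  · exact h.trans (bruhatLE_simple_mul hu)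

theorem le_mul_simple {m u : W} {i : B} (h : BruhatLE cs m u)
    (hm : ℓ m < ℓ (m * s i)) : BruhatLE cs m (u * s i) := by
  rcases Nat.lt_or_gt_of_ne (cs.length_mul_simple_ne u i) with hu | hu
  · exact (h.le_mul_simple_or hu).elim id (bruhatLE_mul_simple hm).trans
  · exact h.trans (bruhatLE_mul_simple hu)

end BruhatLE

theorem le_demStep (x : W) (i : B) : BruhatLE cs x (demStep cs x i) := by
  unfold demStep
  split_ifs with h
  · exact bruhatLE_mul_simple h
  · exact .refl x

theorem BruhatLE.mul_simple_le_demStep {x y : W} {i : B} (h : BruhatLE cs y x) :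
    BruhatLE cs (y * s i) (demStep cs x i) := by
  unfold demStep
  split_ifs with hx
  · exact h.mul_simple_mul_simple hx
  · exact h.mul_simple_le (lt_of_le_of_ne (not_lt.1 hx) (cs.length_mul_simple_ne x i))

theorem demStep_mono {x y : W} (i : B) (h : BruhatLE cs x y) :
    BruhatLE cs (demStep cs x i) (demStep cs y i) := by
  by_cases hx : ℓ x < ℓ (x * s i)
  · rw [demStep, if_pos hx]
    exact h.mul_simple_le_demStep
  · rw [demStep, if_neg hx]
    exact h.trans (le_demStep y i)

theorem demWord_mono {x y : W} (l : List B) (h : BruhatLE cs x y) :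
    BruhatLE cs (demWord cs x l) (demWord cs y l) := by
  induction l generalizing x y with
  | nil => exact h
  | cons i l ih => exact ih (demStep_mono i h)

theorem isMaxOf_demWord {l : List B} (hl : cs.IsReduced l) (x : W) :
    IsMaxOf cs {w | ∃ z, BruhatLE cs z (π l) ∧ w = x * z} (demWord cs x l) := by
  induction l using List.reverseRecOn with
  | nil =>
    refine ⟨⟨1, .refl 1, by simp [demWord]⟩, ?_⟩
    rintro _ ⟨z, hz, rfl⟩
    obtain rfl : z = 1 := cs.length_eq_zero_iff.1 (by simpa using hz.length_le)
    simpa [demWord] using BruhatLE.refl x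
  | append_singleton l c ih =>
    obtain ⟨hl', hasc⟩ := hl.of_append_singleton
    obtain ⟨⟨z, hz, hD⟩, hmax⟩ := ih hl'
    have hstep : demWord cs x (l ++ [c]) = demStep cs (demWord cs x l) c := List.foldl_append ..
    rw [hstep, wordProd_append, wordProd_singleton]
    refine ⟨?_, ?_⟩
    · unfold demStep
      split_ifs
      · exact ⟨z * s c, hz.mul_simple_mul_simple hasc, by rw [hD, mul_assoc]⟩
      · exact ⟨z, hz.trans (bruhatLE_mul_simple hasc), hD⟩
    · rintro _ ⟨z', hz', rfl⟩
      have hdesc : cs.IsRightDescent (π l * s c) c := by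
        rwa [IsRightDescent, simple_mul_simple_cancel_right]
      rcases hz'.le_mul_simple_or hdesc with h | h
      · rw [simple_mul_simple_cancel_right] at h
        exact (hmax _ ⟨z', h, rfl⟩).trans (le_demStep _ c)
      · rw [simple_mul_simple_cancel_right] at h
        simpa [mul_assoc] using (hmax _ ⟨z' * s c, h, rfl⟩).mul_simple_le_demStep (i := c)

theorem isMaxOf_dem (x y : W) :
    IsMaxOf cs {w | ∃ z, BruhatLE cs z y ∧ w = x * z} (dem cs x y) := by
  obtain ⟨hred, hy⟩ := Classical.choose_spec (cs.exists_isReduced y)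
  unfold dem
  conv => enter [2, 1, w, 1, z, 1]; rw [hy]
  exact isMaxOf_demWord hred x

theorem dem_mono_left {x x' : W} (y : W) (h : BruhatLE cs x' x) :
    BruhatLE cs (dem cs x' y) (dem cs x y) :=
  demWord_mono _ h

theorem dem_mono_right (x : W) {y y' : W} (h : BruhatLE cs y' y) :
    BruhatLE cs (dem cs x y') (dem cs x y) := by
  obtain ⟨z, hz, hdem⟩ := (isMaxOf_dem x y').1
  rw [hdem]
  exact (isMaxOf_dem x y).2 _ ⟨z, hz.trans h, rfl⟩

section DoubleCosets

variable {I J : Set B}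

theorem simple_mem_parabolic {i : B} (hi : i ∈ I) : s i ∈ parabolic cs I :=
  Subgroup.subset_closure ⟨i, hi, rfl⟩

theorem mem_doset_self (I J : Set B) (w : W) : w ∈ doset cs I J w :=
  ⟨1, one_mem _, 1, one_mem _, by simp⟩

theorem simple_mul_mem_doset {w x : W} {i : B} (hi : i ∈ I) (hx : x ∈ doset cs I J w) :
    s i * x ∈ doset cs I J w := by
  obtain ⟨a, ha, b, hb, rfl⟩ := hx
  exact ⟨s i * a, mul_mem (simple_mem_parabolic hi) ha, b, hb, by simp only [mul_assoc]⟩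

theorem mul_simple_mem_doset {w x : W} {j : B} (hj : j ∈ J) (hx : x ∈ doset cs I J w) :
    x * s j ∈ doset cs I J w := by
  obtain ⟨a, ha, b, hb, rfl⟩ := hx
  exact ⟨a, ha, b * s j, mul_mem hb (simple_mem_parabolic hj), by simp only [mul_assoc]⟩

theorem mem_doset_of_mem {w x y : W} (hx : x ∈ doset cs I J w) (hy : y ∈ doset cs I J w) :
    y ∈ doset cs I J x := by
  obtain ⟨a, ha, b, hb, rfl⟩ := hx
  obtain ⟨a', ha', b', hb', rfl⟩ := hy
  refine ⟨a' * a⁻¹, mul_mem ha' (inv_mem ha), b⁻¹ * b', mul_mem (inv_mem hb) hb', ?_⟩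
  group

theorem doset_induction {P : W → Prop} (hleft : ∀ i ∈ I, ∀ w, P w → P (s i * w))
    (hright : ∀ j ∈ J, ∀ w, P w → P (w * s j)) {u x : W} (hx : x ∈ doset cs I J u)
    (hu : P u) : P x := by
  obtain ⟨a, ha, b, hb, rfl⟩ := hx
  have hmul_left : ∀ w, P w → P (a * w) := by
    induction ha using Subgroup.closure_induction_left with
    | one => simp
    | mul_left _ hy _ _ ih =>
      obtain ⟨i, hi, rfl⟩ := hy
      exact fun w hw => by rw [mul_assoc]; exact hleft i hi _ (ih w hw)
    | inv_mul_cancel _ hy _ _ ih =>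
      obtain ⟨i, hi, rfl⟩ := hy
      exact fun w hw => by rw [inv_simple, mul_assoc]; exact hleft i hi _ (ih w hw)
  have hmul_right : ∀ w, P w → P (w * b) := by
    induction hb using Subgroup.closure_induction_right with
    | one => simp
    | mul_right _ _ _ hy ih =>
      obtain ⟨j, hj, rfl⟩ := hy
      exact fun w hw => by rw [← mul_assoc]; exact hright j hj _ (ih w hw)
    | mul_inv_cancel _ _ _ hy ih =>
      obtain ⟨j, hj, rfl⟩ := hy
      exact fun w hw => by rw [inv_simple, ← mul_assoc]; exact hright j hj _ (ih w hw)
  exact hmul_right _ (hmul_left u hu)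

variable {w M m : W}

theorem IsMaxOf.isLeftDescent (hM : IsMaxOf cs (doset cs I J w) M) {i : B} (hi : i ∈ I) :
    cs.IsLeftDescent M i :=
  lt_of_le_of_ne (hM.2 _ (simple_mul_mem_doset hi hM.1)).length_le (cs.length_simple_mul_ne M i)

theorem IsMaxOf.isRightDescent (hM : IsMaxOf cs (doset cs I J w) M) {j : B} (hj : j ∈ J) :
    cs.IsRightDescent M j :=
  lt_of_le_of_ne (hM.2 _ (mul_simple_mem_doset hj hM.1)).length_le (cs.length_mul_simple_ne M j)

theorem IsMinOf.lt_length_simple_mul (hm : IsMinOf cs (doset cs I J w) m) {i : B} (hi : i ∈ I) :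
    ℓ m < ℓ (s i * m) :=
  lt_of_le_of_ne (hm.2 _ (simple_mul_mem_doset hi hm.1)).length_le
    (cs.length_simple_mul_ne m i).symm

theorem IsMinOf.lt_length_mul_simple (hm : IsMinOf cs (doset cs I J w) m) {j : B} (hj : j ∈ J) :
    ℓ m < ℓ (m * s j) :=
  lt_of_le_of_ne (hm.2 _ (mul_simple_mem_doset hj hm.1)).length_le
    (cs.length_mul_simple_ne m j).symm

variable {w' x y : W}

theorem IsMaxOf.doset_mono {M M' : W} (hM' : IsMaxOf cs (doset cs I J w') M')
    (hM : IsMaxOf cs (doset cs I J w) M) (hx : x ∈ doset cs I J w') (hy : y ∈ doset cs I J w)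
    (hxy : BruhatLE cs x y) : BruhatLE cs M' M :=
  doset_induction (P := (BruhatLE cs · M))
    (fun _ hi _ h => h.simple_mul_le (hM.isLeftDescent hi))
    (fun _ hj _ h => h.mul_simple_le (hM.isRightDescent hj))
    (mem_doset_of_mem hx hM'.1) (hxy.trans (hM.2 y hy))

theorem IsMinOf.doset_mono {m m' : W} (hm' : IsMinOf cs (doset cs I J w') m')
    (hm : IsMinOf cs (doset cs I J w) m) (hx : x ∈ doset cs I J w') (hy : y ∈ doset cs I J w)
    (hxy : BruhatLE cs x y) : BruhatLE cs m' m :=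
  doset_induction (P := (BruhatLE cs m' ·))
    (fun _ hi _ h => h.le_simple_mul (hm'.lt_length_simple_mul hi))
    (fun _ hj _ h => h.le_mul_simple (hm'.lt_length_mul_simple hj))
    (mem_doset_of_mem hy hm.1) ((hm'.2 x hx).trans hxy)

end DoubleCosets

theorem star_bruhat_monotone_general (cs : CoxeterSystem M W) (I J K L : Set B)
    (wq wq' mq mq' Mp Mq Mq' Mr : W)
    (hmq : IsMinOf cs (doset cs I J wq) mq)
    (hmq' : IsMinOf cs (doset cs I J wq') mq')
    (hle : BruhatLE cs mq' mq)
    (hMq : IsMaxOf cs (doset cs I J wq) Mq)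
    (hMq' : IsMaxOf cs (doset cs I J wq') Mq') :
    ∀ m1 m2, IsMinOf cs (doset cs K L (dem cs (dem cs Mp Mq') Mr)) m1 →
      IsMinOf cs (doset cs K L (dem cs (dem cs Mp Mq) Mr)) m2 →
      BruhatLE cs m1 m2 := by
  intro m1 m2 hm1 hm2
  have hmax : BruhatLE cs Mq' Mq := hMq'.doset_mono hMq hmq'.1 hmq.1 hle
  have hdem : BruhatLE cs (dem cs (dem cs Mp Mq') Mr) (dem cs (dem cs Mp Mq) Mr) :=
    dem_mono_left Mr (dem_mono_right Mp hmax)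
  exact hm1.doset_mono hm2 (mem_doset_self ..) (mem_doset_self ..) hdem

/-- If `q' ≤ q` as `(I,J)`-cosets, `p` a `(K,I)`-coset and `r` a `(J,L)`-coset,
then `p * q' * r ≤ p * q * r` in the Bruhat order on `(K,L)`-cosets. -/
theorem star_bruhat_monotone (cs : CoxeterSystem M W) (I J K L : Set B)
    (hI : Finitary cs I) (hJ : Finitary cs J) (hK : Finitary cs K) (hL : Finitary cs L)
    (wp wq wq' wr mq mq' Mp Mq Mq' Mr : W)
    (hmq : IsMinOf cs (doset cs I J wq) mq)
    (hmq' : IsMinOf cs (doset cs I J wq') mq')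
    (hle : BruhatLE cs mq' mq)
    (hMp : IsMaxOf cs (doset cs K I wp) Mp)
    (hMq : IsMaxOf cs (doset cs I J wq) Mq)
    (hMq' : IsMaxOf cs (doset cs I J wq') Mq')
    (hMr : IsMaxOf cs (doset cs J L wr) Mr) :
    ∀ m1 m2, IsMinOf cs (doset cs K L (dem cs (dem cs Mp Mq') Mr)) m1 →
      IsMinOf cs (doset cs K L (dem cs (dem cs Mp Mq) Mr)) m2 →
      BruhatLE cs m1 m2 :=
  star_bruhat_monotone_general cs I J K L wq wq' mq mq' Mp Mq Mq' Mr hmq hmq' hle hMq hMq'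

end CoxeterPaper
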